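/- Let (a_n) be a real sequence and let c > 0 and d > 1 be real constants such that a_n is asymptotically equivalent to c · d^n · n^(−3/2) as n → ∞. Define b_n = ∑_{i=1}^{n} a_i. Then b_n is asymptotically equivalent to c · (d/(d−1)) · d^n · n^(−3/2) as n → ∞. -/

import Mathlib

/-!
Let `F n = c d^n n^(-3/2)` and `G = F · d/(d-1)`. Since `F n / F (n+1) → 1/d`, the increments
`G (n+1) - G n` are `~ F (n+1)`. Equivalence of nonnegative terms with divergent sum passes to
partial sums (Stolz–Cesàro), so `b n = ∑_{i<n} a (i+1) ~ ∑_{i<n} F (i+1) ~ G n - G 0 ~ G n`.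
-/

open Filter Finset
open scoped Topology

namespace Asymptotics

theorem IsEquivalent.sum_range {u v : ℕ → ℝ} (huv : u ~[atTop] v) (hv : 0 ≤ v)
    (hv_sum : Tendsto (fun n => ∑ i ∈ range n, v i) atTop atTop) :
    (fun n => ∑ i ∈ range n, u i) ~[atTop] fun n => ∑ i ∈ range n, v i := by
  refine IsLittleO.isEquivalent ?_
  simpa only [Pi.sub_def, sum_sub_distrib] using huv.isLittleO.sum_range hv hv_sum

end Asymptotics

open Asymptotics

theorem tendsto_sum_range_succ_atTop {f : ℕ → ℝ} (hf0 : 0 ≤ f)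
    (hf : Tendsto f atTop atTop) :
    Tendsto (fun n => ∑ i ∈ range n, f (i + 1)) atTop atTop := by
  refine tendsto_atTop_mono' _ ?_ hf
  filter_upwards [eventually_ge_atTop 1] with n hn
  obtain ⟨m, rfl⟩ := Nat.exists_eq_add_of_le' hn
  rw [sum_range_succ]
  linarith [sum_nonneg fun i (_ : i ∈ range m) => hf0 (i + 1)]

theorem isEquivalent_sum_range_succ_of_tendsto_div_succ {f : ℕ → ℝ} {r : ℝ} (hr : r ≠ 1)
    (hf0 : 0 ≤ f) (hf : Tendsto f atTop atTop)
    (hratio : Tendsto (fun n => f n / f (n + 1)) atTop (𝓝 r)) :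
    (fun n => ∑ i ∈ range n, f (i + 1)) ~[atTop] fun n => f n / (1 - r) := by
  have hr' : 1 - r ≠ 0 := sub_ne_zero.2 hr.symm
  set G : ℕ → ℝ := fun n => f n / (1 - r)
  have hΔ : (fun n => G (n + 1) - G n) ~[atTop] fun n => f (n + 1) := by
    refine isEquivalent_of_tendsto_one ?_
    have hlim : Tendsto (fun n => (1 - f n / f (n + 1)) / (1 - r)) atTop (𝓝 1) := by
      simpa [div_self hr'] using (hratio.const_sub 1).div_const (1 - r)
    refine hlim.congr' ?_
    filter_upwards [(hf.comp (tendsto_add_atTop_nat 1)).eventually_gt_atTop 0] with n hn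
    simp only [G, Pi.div_apply, Function.comp_apply] at hn ⊢
    field_simp
  have hS := tendsto_sum_range_succ_atTop hf0 hf
  have hGS : (fun n => G n - G 0) ~[atTop] fun n => ∑ i ∈ range n, f (i + 1) := by
    simpa only [sum_range_sub] using hΔ.sum_range (fun n => hf0 (n + 1)) hS
  simpa using (hGS.add_const_of_norm_tendsto_atTop (c := G 0)
    (tendsto_norm_atTop_atTop.comp hS)).symm

section

variable {c d : ℝ} (p : ℝ)

theorem tendsto_mul_pow_mul_rpow_atTop (hc : 0 < c) (hd : 1 < d) :
    Tendsto (fun n : ℕ => c * d ^ n * (n : ℝ) ^ p) atTop atTop := by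
  have h := (tendsto_exp_mul_div_rpow_atTop (-p) (Real.log d) (Real.log_pos hd)).const_mul_atTop hc
  refine (h.comp tendsto_natCast_atTop_atTop).congr fun n => ?_
  simp only [Function.comp_apply, Real.rpow_neg (Nat.cast_nonneg n), div_inv_eq_mul,
    mul_comm (Real.log d), Real.exp_nat_mul, Real.exp_log (by linarith : 0 < d), mul_assoc]

theorem tendsto_mul_pow_mul_rpow_div_succ (hc : c ≠ 0) (hd : d ≠ 0) :
    Tendsto (fun n : ℕ => c * d ^ n * (n : ℝ) ^ p /
        (c * d ^ (n + 1) * ((n + 1 : ℕ) : ℝ) ^ p))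
      atTop (𝓝 d⁻¹) := by
  have h := ((tendsto_natCast_div_add_atTop (1 : ℝ)).rpow_const (p := p)
    (Or.inl one_ne_zero)).const_mul d⁻¹
  rw [Real.one_rpow, mul_one] at h
  refine h.congr fun n => ?_
  have hn : (0 : ℝ) < n + 1 := by positivity
  rw [Real.div_rpow (Nat.cast_nonneg n) hn.le, Nat.cast_succ]
  field_simp [(Real.rpow_pos_of_pos hn p).ne']
  ring

end

theorem partial_sums_isEquivalent
    (a : ℕ → ℝ) (c d : ℝ) (hc : 0 < c) (hd : 1 < d)
    (ha : Asymptotics.IsEquivalent atTop a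
      (fun n => c * d ^ n * (n : ℝ) ^ (-(3 / 2 : ℝ))))
    (b : ℕ → ℝ) (hb : ∀ n, b n = ∑ i ∈ Finset.Icc 1 n, a i) :
    Asymptotics.IsEquivalent atTop b
      (fun n => c * (d / (d - 1)) * d ^ n * (n : ℝ) ^ (-(3 / 2 : ℝ))) := by
  set F : ℕ → ℝ := fun n => c * d ^ n * (n : ℝ) ^ (-(3 / 2 : ℝ))
  have hd0 : 0 < d := by linarith
  have hF0 : 0 ≤ F := fun n => by positivity
  have hFtop : Tendsto F atTop atTop := tendsto_mul_pow_mul_rpow_atTop _ hc hd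
  have hshift : (fun i => a (i + 1)) ~[atTop] fun i => F (i + 1) :=
    ha.comp_tendsto (tendsto_add_atTop_nat 1)
  have hb' : b = fun n => ∑ i ∈ range n, a (i + 1) := funext fun n => by
    rw [hb, range_eq_Ico, sum_Ico_add' a 0 n 1, zero_add, Ico_add_one_right_eq_Icc]
  have htarget : (fun n : ℕ => c * (d / (d - 1)) * d ^ n * (n : ℝ) ^ (-(3 / 2 : ℝ))) =
      fun n => F n / (1 - d⁻¹) := funext fun n => by
    have : d - 1 ≠ 0 := by linarith
    simp only [F]
    field_simp
  rw [hb', htarget]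
  exact (hshift.sum_range (fun n => hF0 (n + 1)) (tendsto_sum_range_succ_atTop hF0 hFtop)).trans
    (isEquivalent_sum_range_succ_of_tendsto_div_succ (inv_ne_one.2 hd.ne') hF0 hFtop
      (tendsto_mul_pow_mul_rpow_div_succ _ hc.ne' hd0.ne'))
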